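/- For every s ∈ S_0 there is T_s > t_s (one may take T_s = 20 + 2 t_s*) such that for every t ≥ T_s the map κ ↦ g_s^κ(t) is defined and holomorphic on the disk B_{2πt}(0) = {κ : |κ| < 2πt} and has exactly one zero κ_0 in this disk, which is a simple zero; moreover κ_0 = t + 2πi s_1 + R_s(t) with |R_s(t)| ≤ 2e^{−t}(2πt + 2π|s_2| + 12) < 5. -/

import Mathlib

open Filter Topology Set MeasureTheory
open scoped ENNReal Real

noncomputable section

/-- The exponential family `E_κ(z) = exp (z + κ)`. -/
def Ek (κ : ℂ) (z : ℂ) : ℂ := Complex.exp (z + κ)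

/-- The model function `F(t) = e^t - 1` for exponential growth. -/
def F (t : ℝ) : ℝ := Real.exp t - 1

/-- The inverse of `F` on the nonnegative reals. -/
def Finv (t : ℝ) : ℝ := Real.log (t + 1)

/-- The shift map `σ` on integer sequences; the sequence `s : ℕ → ℤ` represents
`(s_1, s_2, …)` with `s_{k+1} = s k`. -/
def shiftSeq (s : ℕ → ℤ) : ℕ → ℤ := fun n => s (n + 1)

/-- Exponentially bounded sequences (membership in `S_0`). -/
def expBounded (s : ℕ → ℤ) : Prop := ∃ x > 0, ∀ k : ℕ, |(s k : ℝ)| ≤ F^[k] x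

/-- `t_s^* = sup_{n ≥ 1} F^{∘(-n+1)}(|s_n|)`, as an extended nonnegative real. -/
def tstar (s : ℕ → ℤ) : ℝ≥0∞ := ⨆ n : ℕ, ENNReal.ofReal (Finv^[n] |(s n : ℝ)|)

/-- `t_s^*` as a real number (for exponentially bounded `s`). -/
def tstarR (s : ℕ → ℤ) : ℝ := (tstar s).toReal

/-- The minimal potential `t_s`. -/
def tmin (s : ℕ → ℤ) : ℝ≥0∞ :=
  sInf { y : ℝ≥0∞ | ∃ x : ℝ, 0 < x ∧ y = ENNReal.ofReal x ∧
    Filter.limsup (fun n => ENNReal.ofReal (|(s n : ℝ)| / F^[n] x)) Filter.atTop = 0 }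

/-- The slit plane `ℂ' = ℂ ∖ (-∞, 0]`. -/
def Cprime : Set ℂ := {z : ℂ | 0 < z.re ∨ z.im ≠ 0}

/-- The inverse branch `L_{κ,j}(z) = Log z - κ + 2πij`. -/
def Lk (κ : ℂ) (j : ℤ) (z : ℂ) : ℂ :=
  Complex.log z - κ + 2 * (Real.pi : ℂ) * Complex.I * (j : ℂ)

/-- The pullback approximants `g^n_{κ,s}(t) = L_{κ,s_1} ∘ ⋯ ∘ L_{κ,s_n}(F^∘n(t))`. -/
def gApprox (κ : ℂ) : ℕ → (ℕ → ℤ) → ℝ → ℂ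
  | 0, _, t => (t : ℂ)
  | n + 1, s, t => Lk κ (s 0) (gApprox κ n (shiftSeq s) (F t))

/-- All intermediate values of the `n`-th pullback approximant lie in the slit plane. -/
def approxDefined (κ : ℂ) : ℕ → (ℕ → ℤ) → ℝ → Prop
  | 0, _, _ => True
  | n + 1, s, t => gApprox κ n (shiftSeq s) (F t) ∈ Cprime ∧ approxDefined κ n (shiftSeq s) (F t)

/-- The pullback approximants at `(s, t)` are eventually defined and converge to `z`. -/
def RayTendsto (κ : ℂ) (s : ℕ → ℤ) (t : ℝ) (z : ℂ) : Prop :=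
  (∀ᶠ n in Filter.atTop, approxDefined κ n s t) ∧
  Filter.Tendsto (fun n => gApprox κ n s t) Filter.atTop (nhds z)

/-- The dynamic ray of `E_κ` at address `s` is defined at potential `t`. -/
def RayDefinedAt (κ : ℂ) (s : ℕ → ℤ) (t : ℝ) : Prop := ∃ z, RayTendsto κ s t z

-- The dynamic ray `g_s^κ(t)` (junk value `0` where undefined).
open Classical in
def ray (κ : ℂ) (s : ℕ → ℤ) (t : ℝ) : ℂ :=
  if h : ∃ z, RayTendsto κ s t z then h.choose else 0

/-- The set `𝒢_s(t)` of parameters `κ` for which the dynamic ray of `E_κ` at address `s`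
is defined at potential `t` with `g_s^κ(t) = 0`. -/
def Gset (s : ℕ → ℤ) (t : ℝ) : Set ℂ :=
  {κ : ℂ | ∃ N : ℕ, RayTendsto κ (shiftSeq^[N] s) (F^[N] t) ((Ek κ)^[N] 0)}

/-- The set `I` of escaping parameters. -/
def escapingParams : Set ℂ :=
  {κ : ℂ | Filter.Tendsto (fun n => ‖(Ek κ)^[n] 0‖) Filter.atTop Filter.atTop}

/-- The interval `(t_s, ∞)` of potentials. -/
def rayDomain (s : ℕ → ℤ) : Set ℝ := {t : ℝ | tmin s < ENNReal.ofReal t}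

/-- `κ₀` is a simple root of the holomorphic map `κ ↦ g_s^κ(t)`. -/
def SimpleRoot (s : ℕ → ℤ) (t : ℝ) (κ₀ : ℂ) : Prop :=
  ray κ₀ s t = 0 ∧ RayDefinedAt κ₀ s t ∧
  ∃ U ∈ nhds κ₀, (∀ κ ∈ U, RayDefinedAt κ s t) ∧
    DifferentiableOn ℂ (fun κ => ray κ s t) U ∧
    deriv (fun κ => ray κ s t) κ₀ ≠ 0

end

/-!
For `‖κ‖ ≤ K` and `t` large compared with `K` and with the entries of `s`, every approximant
`g^n_{κ,s}(t)` stays within `K + 2π|s_1| + π + 1` of `t`. Hence each branch `L_{κ,s_k}` is only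
applied on a half-plane `Re z ≥ e^{F^{k-1}(t)}/2`, where it is `2e^{-F^{k-1}(t)}`-Lipschitz, so
the approximants converge geometrically and uniformly in `κ`: the ray `κ ↦ g_s^κ(t)` is
holomorphic and `g_s^κ(t) = a - κ + r(κ)` with `a = t + 2πi s_1` and
`|r(κ)| ≤ 2e^{-t}(K + 2π|s_2| + π + 2)`.

For `K = 2πt` and `t ≥ 2x + 33`, where `|s_{k+1}| ≤ F^k(x)`, this error is at most `1/2`. By
Cauchy's estimate `r` is then `1/2`-Lipschitz on the unit disc around `a`, so the zeros of the ray
are the fixed points of the contraction `κ ↦ a + r(κ)`, and its derivative `r' - 1` does not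
vanish there.
-/

open Metric

lemma F_mono : Monotone F := fun _ _ h => sub_le_sub_right (Real.exp_le_exp.2 h) 1

lemma le_F (t : ℝ) : t ≤ F t := by
  unfold F; linarith [Real.add_one_le_exp t]

lemma le_F_iter (n : ℕ) (t : ℝ) : t ≤ F^[n] t :=
  Function.id_le_iterate_of_id_le le_F n t

lemma exp_eq_F_add_one (t : ℝ) : Real.exp t = F t + 1 := by
  unfold F; ring

lemma F_add_F_le {a b : ℝ} (ha : 0 ≤ a) (hb : 0 ≤ b) : F a + F b ≤ F (a + b) := by
  unfold F
  rw [Real.exp_add]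
  nlinarith [Real.one_le_exp ha, Real.one_le_exp hb]

lemma F_iter_add_F_iter_le {a b : ℝ} (ha : 0 ≤ a) (hb : 0 ≤ b) (n : ℕ) :
    F^[n] a + F^[n] b ≤ F^[n] (a + b) := by
  induction n with
  | zero => simp
  | succ n ih =>
    simp only [Function.iterate_succ_apply']
    exact (F_add_F_le (ha.trans (le_F_iter n a)) (hb.trans (le_F_iter n b))).trans (F_mono ih)

lemma exp_mul_F_le_F_add (a : ℝ) {b : ℝ} (hb : 0 ≤ b) : Real.exp b * F a ≤ F (a + b) := by
  unfold F
  rw [Real.exp_add]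
  nlinarith [Real.one_le_exp hb]

lemma natCast_mul_F_le_F_mul (m : ℕ) (u : ℝ) : m * F u ≤ F (m * u) := by
  have hbern := one_add_mul_le_pow (a := Real.exp u - 1) (by linarith [Real.exp_pos u]) m
  rw [add_sub_cancel, ← Real.exp_nat_mul] at hbern
  unfold F
  linarith

lemma natCast_mul_F_iter_succ_le (m : ℕ) {x : ℝ} (hx : 0 ≤ x) (n : ℕ) :
    m * F^[n + 1] x ≤ F^[n + 1] (x + m) := by
  induction n with
  | zero =>
    have hm : (m : ℝ) ≤ Real.exp m := by linarith [Real.add_one_le_exp m]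
    simpa using (mul_le_mul_of_nonneg_right hm ((le_F x).trans' hx)).trans
      (exp_mul_F_le_F_add x m.cast_nonneg)
  | succ n ih =>
    rw [Function.iterate_succ_apply' F (n + 1), Function.iterate_succ_apply' F (n + 1)]
    exact (natCast_mul_F_le_F_mul m _).trans (F_mono ih)

lemma F_iter_succ_add_le {a b c : ℝ} (ha : 0 ≤ a) (hc : 0 ≤ c) (h : F a + c ≤ F b)
    (n : ℕ) :
    F^[n + 1] a + c ≤ F^[n + 1] b := by
  induction n with
  | zero => simpa using h
  | succ n ih =>
    rw [Function.iterate_succ_apply' F (n + 1), Function.iterate_succ_apply' F (n + 1)]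
    calc F (F^[n + 1] a) + c ≤ F (F^[n + 1] a) + F c := by linarith [le_F c]
      _ ≤ F (F^[n + 1] a + c) := F_add_F_le (ha.trans (le_F_iter _ a)) hc
      _ ≤ F (F^[n + 1] b) := F_mono ih

lemma add_half_le_F {y : ℝ} (hy : 1 ≤ y) : y + 1 / 2 ≤ F y := by
  unfold F
  nlinarith [Real.quadratic_le_exp_of_nonneg (zero_le_one.trans hy)]

lemma one_add_div_two_le_F_iter_one (m : ℕ) : 1 + m / 2 ≤ F^[m] (1 : ℝ) := by
  induction m with
  | zero => simp
  | succ m ih =>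
    rw [Function.iterate_succ_apply']
    push_cast
    linarith [add_half_le_F (show (1 : ℝ) ≤ F^[m] 1 by linarith [m.cast_nonneg (α := ℝ)])]

lemma F_iter_succ_div_le {x : ℝ} (hx : 0 ≤ x) (m : ℕ) :
    F^[m + 1] x / F^[m + 1] (x + 1) ≤ Real.exp (-F^[m] 1) := by
  have hpos : 0 < F^[m + 1] (x + 1) := by linarith [le_F_iter (m + 1) (x + 1)]
  rw [div_le_iff₀ hpos, Function.iterate_succ_apply' F m, Function.iterate_succ_apply' F m]
  have hgap : F^[m] x + F^[m] 1 ≤ F^[m] (x + 1) := F_iter_add_F_iter_le hx zero_le_one m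
  calc F (F^[m] x) = Real.exp (-F^[m] 1) * (Real.exp (F^[m] 1) * F (F^[m] x)) := by
        rw [← mul_assoc, ← Real.exp_add, neg_add_cancel, Real.exp_zero, one_mul]
    _ ≤ Real.exp (-F^[m] 1) * F (F^[m] (x + 1)) := by
        gcongr
        exact (exp_mul_F_le_F_add _ (zero_le_one.trans (le_F_iter m 1))).trans (F_mono hgap)

lemma tendsto_F_iter_div_F_iter_add_one {x : ℝ} (hx : 0 ≤ x) :
    Tendsto (fun n => F^[n] x / F^[n] (x + 1)) atTop (𝓝 0) := by
  rw [← tendsto_add_atTop_iff_nat 1]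
  have hgrow : Tendsto (fun m : ℕ => F^[m] (1 : ℝ)) atTop atTop :=
    tendsto_atTop_mono one_add_div_two_le_F_iter_one <| tendsto_atTop_add_const_left _ _ <|
      tendsto_natCast_atTop_atTop.atTop_div_const two_pos
  refine squeeze_zero (fun m => div_nonneg ?_ ?_) (F_iter_succ_div_le hx)
    (Real.tendsto_exp_neg_atTop_nhds_zero.comp hgrow)
  · exact hx.trans (le_F_iter _ x)
  · linarith [le_F_iter (m + 1) (x + 1)]

lemma tmin_le_ofReal_add_one {s : ℕ → ℤ} {x : ℝ} (hs : ∀ k, |(s k : ℝ)| ≤ F^[k] x) :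
    tmin s ≤ ENNReal.ofReal (x + 1) := by
  have hx : 0 ≤ x := (abs_nonneg _).trans (hs 0)
  refine sInf_le ⟨x + 1, by linarith, rfl, ?_⟩
  have hlim : Tendsto (fun n => |(s n : ℝ)| / F^[n] (x + 1)) atTop (𝓝 0) := by
    refine squeeze_zero (fun n => div_nonneg (abs_nonneg _) ?_) (fun n => ?_)
      (tendsto_F_iter_div_F_iter_add_one hx)
    · linarith [le_F_iter n (x + 1)]
    · gcongr
      · linarith [le_F_iter n (x + 1)]
      · exact hs n
  simpa using (ENNReal.tendsto_ofReal hlim).limsup_eq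

lemma sixty_mul_le_exp {t : ℝ} (ht : 20 ≤ t) : 60 * t ≤ Real.exp t := by
  have h := Real.pow_div_factorial_le_exp t (by linarith) 3
  norm_num [Nat.factorial] at h
  nlinarith [mul_le_mul ht ht (by norm_num) (by linarith : (0 : ℝ) ≤ t)]

lemma abs_log_F_sub_le {t : ℝ} (ht : 1 ≤ F t) : |Real.log (F t) - t| ≤ 2 * Real.exp (-t) := by
  have hu2 : Real.exp (-t) ≤ 1 / 2 := by
    rw [Real.exp_neg, exp_eq_F_add_one]
    exact inv_le_of_inv_le₀ (by norm_num) (by linarith)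
  have hF : F t = Real.exp t * (1 - Real.exp (-t)) := by
    rw [Real.exp_neg, mul_sub, mul_inv_cancel₀ (Real.exp_ne_zero t)]
    unfold F; ring
  set u := Real.exp (-t)
  have hu : 0 < u := Real.exp_pos _
  have hlog : Real.log (F t) - t = Real.log (1 - u) := by
    rw [hF, Real.log_mul (Real.exp_ne_zero t) (by linarith), Real.log_exp]
    ring
  have hupper : Real.log (1 - u) ≤ 0 := Real.log_nonpos (by linarith) (by linarith)
  have hlower : 1 - (1 - u)⁻¹ ≤ Real.log (1 - u) :=
    Real.one_sub_inv_le_log_of_pos (by linarith)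
  have hinv : (1 - u)⁻¹ ≤ 1 + 2 * u := by
    rw [inv_le_iff_one_le_mul₀ (by linarith)]
    nlinarith
  rw [hlog, abs_of_nonpos hupper]
  linarith

lemma norm_two_pi_I_mul_intCast (j : ℤ) :
    ‖2 * (π : ℂ) * Complex.I * (j : ℂ)‖ = 2 * π * |(j : ℝ)| := by
  simp [abs_of_pos Real.pi_pos]

lemma Lk_sub_Lk (κ : ℂ) (j : ℤ) (z w : ℂ) :
    Lk κ j z - Lk κ j w = Complex.log z - Complex.log w := by
  simp only [Lk]; ring

lemma norm_Lk_sub_le (κ : ℂ) (j : ℤ) (z w : ℂ) :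
    ‖Lk κ j z - w‖ ≤ ‖Complex.log z - w‖ + ‖κ‖ + 2 * π * |(j : ℝ)| := by
  rw [← norm_two_pi_I_mul_intCast, ← norm_neg κ]
  have : Lk κ j z - w = Complex.log z - w + -κ + 2 * (π : ℂ) * Complex.I * (j : ℂ) := by
    simp only [Lk]; ring
  rw [this]
  exact norm_add₃_le

lemma norm_log_sub_log_le {c : ℝ} (hc : 0 < c) {z w : ℂ} (hz : c ≤ z.re) (hw : c ≤ w.re) :
    ‖Complex.log z - Complex.log w‖ ≤ ‖z - w‖ / c := by
  have hderiv : ∀ u ∈ {u : ℂ | c ≤ u.re},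
      HasDerivWithinAt Complex.log u⁻¹ {u : ℂ | c ≤ u.re} u := fun u hu =>
    (Complex.hasDerivAt_log (Or.inl (hc.trans_le hu))).hasDerivWithinAt
  have hbound : ∀ u ∈ {u : ℂ | c ≤ u.re}, ‖u⁻¹‖ ≤ c⁻¹ := fun u hu => by
    rw [norm_inv]
    exact inv_anti₀ hc (hu.trans (Complex.re_le_norm u))
  rw [div_eq_inv_mul]
  exact (convex_halfSpace_re_ge c).norm_image_sub_le_of_norm_hasDerivWithin_le hderiv hbound hw hz

lemma exp_div_two_le_re {t : ℝ} {z : ℂ} (h : ‖z - F t‖ ≤ (F t - 1) / 2) :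
    Real.exp t / 2 ≤ z.re := by
  have hre := (abs_le.1 ((Complex.abs_re_le_norm (z - F t)).trans h)).1
  rw [Complex.sub_re, Complex.ofReal_re] at hre
  linarith [exp_eq_F_add_one t]

lemma norm_log_sub_le {t : ℝ} {z : ℂ} (h : ‖z - F t‖ ≤ (F t - 1) / 2) :
    ‖Complex.log z - t‖ ≤ π + 1 := by
  have hlow : Real.exp t / 2 ≤ ‖z‖ := (exp_div_two_le_re h).trans (Complex.re_le_norm z)
  have hup : ‖z‖ ≤ 3 / 2 * Real.exp t := by
    have := norm_le_norm_add_norm_sub' z (F t : ℂ)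
    have hF : 0 ≤ F t := by linarith [norm_nonneg (z - F t)]
    rw [Complex.norm_real, Real.norm_of_nonneg hF] at this
    linarith [exp_eq_F_add_one t]
  set y := ‖z‖ / Real.exp t
  have hy : 1 / 2 ≤ y ∧ y ≤ 3 / 2 := by
    constructor
    · rw [le_div_iff₀ (Real.exp_pos t)]; linarith
    · rw [div_le_iff₀ (Real.exp_pos t)]; linarith
  have hre : (Complex.log z - t).re = Real.log y := by
    rw [Complex.sub_re, Complex.log_re, Complex.ofReal_re,
      Real.log_div (by linarith [Real.exp_pos t]) (Real.exp_ne_zero t), Real.log_exp]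
  have hlog : |Real.log y| ≤ 1 := by
    have hl := Real.one_sub_inv_le_log_of_pos (by linarith : 0 < y)
    have hu := Real.log_le_sub_one_of_pos (by linarith : 0 < y)
    have hinv : y⁻¹ ≤ 2 := by rw [inv_le_comm₀ (by linarith) two_pos]; linarith
    rw [abs_le]; constructor <;> linarith
  have him : (Complex.log z - t).im = Complex.arg z := by simp [Complex.log_im]
  calc ‖Complex.log z - t‖ ≤ |(Complex.log z - t).re| + |(Complex.log z - t).im| :=
        Complex.norm_le_abs_re_add_abs_im _
    _ ≤ 1 + π := by
        rw [hre, him]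
        exact add_le_add hlog (Complex.abs_arg_le_pi z)
    _ = π + 1 := add_comm _ _

/-- The values `gApprox κ n (shiftSeq^[k + 1] s) (F^[k + 1] t)` stay within
`K + 2π|s (k + 1)| + π + 1` of `F^[k + 1] t`; asking this to be at most `(F^[k + 1] t - 1) / 2`
puts them in the half-plane `Re z ≥ e^{F^[k] t} / 2`, on which `Complex.log` is
`2e^{-F^[k] t}`-Lipschitz. -/
def LargePotential (K : ℝ) (s : ℕ → ℤ) (t : ℝ) : Prop :=
  ∀ k, 2 * (K + 2 * π * |(s (k + 1) : ℝ)| + π + 1) + 1 ≤ F^[k + 1] t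

lemma ray_eq_of_rayTendsto {κ z : ℂ} {s : ℕ → ℤ} {t : ℝ} (h : RayTendsto κ s t z) :
    ray κ s t = z := by
  have hex : ∃ w, RayTendsto κ s t w := ⟨z, h⟩
  rw [ray, dif_pos hex]
  exact tendsto_nhds_unique hex.choose_spec.2 h.2

namespace LargePotential

variable {K t : ℝ} {s : ℕ → ℤ} {κ : ℂ}

lemma shift (h : LargePotential K s t) : LargePotential K (shiftSeq s) (F t) := fun k => by
  simpa only [shiftSeq, Function.iterate_succ_apply] using h (k + 1)

lemma apply_zero (h : LargePotential K s t) :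
    2 * (K + 2 * π * |(s 1 : ℝ)| + π + 1) + 1 ≤ F t := by
  simpa using h 0

lemma one_le_F (h : LargePotential K s t) (hK : 0 ≤ K) : 1 ≤ F t := by
  have := mul_nonneg (mul_nonneg zero_le_two Real.pi_pos.le) (abs_nonneg (s 1 : ℝ))
  linarith [h.apply_zero, Real.pi_pos]

lemma norm_gApprox_sub_le (h : LargePotential K s t) (hκ : ‖κ‖ ≤ K) (n : ℕ) :
    ‖gApprox κ n s t - t‖ ≤ K + 2 * π * |(s 0 : ℝ)| + π + 1 := by
  induction n generalizing s t with
  | zero =>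
    rw [gApprox, sub_self, norm_zero]
    have := (norm_nonneg κ).trans hκ
    positivity
  | succ n ih =>
    have hz : ‖gApprox κ n (shiftSeq s) (F t) - F t‖ ≤ (F t - 1) / 2 := by
      have := ih h.shift
      simp only [shiftSeq] at this
      linarith [h.apply_zero]
    exact (norm_Lk_sub_le κ (s 0) _ t).trans (by linarith [norm_log_sub_le hz])

lemma norm_gApprox_shift_sub_le (h : LargePotential K s t) (hκ : ‖κ‖ ≤ K) (n : ℕ) :
    ‖gApprox κ n (shiftSeq s) (F t) - F t‖ ≤ K + 2 * π * |(s 1 : ℝ)| + π + 1 := by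
  simpa only [shiftSeq] using h.shift.norm_gApprox_sub_le hκ n

lemma exp_div_two_le_re_gApprox_shift (h : LargePotential K s t) (hκ : ‖κ‖ ≤ K) (n : ℕ) :
    Real.exp t / 2 ≤ (gApprox κ n (shiftSeq s) (F t)).re :=
  exp_div_two_le_re <| (h.norm_gApprox_shift_sub_le hκ n).trans (by linarith [h.apply_zero])

lemma approxDefined_gApprox (h : LargePotential K s t) (hκ : ‖κ‖ ≤ K) (n : ℕ) :
    approxDefined κ n s t := by
  induction n generalizing s t with
  | zero => trivial
  | succ n ih =>
    exact ⟨Or.inl (by linarith [h.exp_div_two_le_re_gApprox_shift hκ n, Real.exp_pos t]),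
      ih h.shift⟩

lemma norm_gApprox_succ_sub_le (h : LargePotential K s t) (hκ : ‖κ‖ ≤ K) (n m : ℕ) :
    ‖gApprox κ (n + 1) s t - gApprox κ (m + 1) s t‖ ≤
      2 * Real.exp (-t) *
        ‖gApprox κ n (shiftSeq s) (F t) - gApprox κ m (shiftSeq s) (F t)‖ := by
  rw [gApprox, gApprox, Lk_sub_Lk]
  refine (norm_log_sub_log_le (by positivity) (h.exp_div_two_le_re_gApprox_shift hκ n)
    (h.exp_div_two_le_re_gApprox_shift hκ m)).trans_eq ?_
  rw [Real.exp_neg]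
  field_simp

lemma norm_gApprox_succ_sub_gApprox_one_le (h : LargePotential K s t) (hκ : ‖κ‖ ≤ K)
    (n : ℕ) :
    ‖gApprox κ (n + 1) s t - gApprox κ 1 s t‖ ≤
      2 * Real.exp (-t) * (K + 2 * π * |(s 1 : ℝ)| + π + 1) :=
  (h.norm_gApprox_succ_sub_le hκ n 0).trans <| by
    gcongr
    exact h.norm_gApprox_shift_sub_le hκ n

lemma two_mul_exp_neg_mul_le_one (h : LargePotential K s t) :
    2 * Real.exp (-t) * (K + 2 * π * |(s 1 : ℝ)| + π + 1) ≤ 1 := by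
  have hexp : Real.exp (-t) * Real.exp t = 1 := by
    rw [← Real.exp_add, neg_add_cancel, Real.exp_zero]
  have hle : 2 * (K + 2 * π * |(s 1 : ℝ)| + π + 1) ≤ Real.exp t := by
    linarith [h.apply_zero, exp_eq_F_add_one t]
  nlinarith [mul_le_mul_of_nonneg_left hle (Real.exp_pos (-t)).le]

lemma norm_gApprox_add_sub_le (h : LargePotential K s t) (hκ : ‖κ‖ ≤ K) (k n : ℕ) :
    ‖gApprox κ (n + k + 1) s t - gApprox κ (k + 1) s t‖ ≤ (1 / 2) ^ k := by
  induction k generalizing s t with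
  | zero =>
    simpa using (h.norm_gApprox_succ_sub_gApprox_one_le hκ n).trans h.two_mul_exp_neg_mul_le_one
  | succ k ih =>
    rw [← add_assoc]
    have hK : 0 ≤ K := (norm_nonneg κ).trans hκ
    have hcontr : 2 * Real.exp (-t) * 2 ≤ 1 :=
      (mul_le_mul_of_nonneg_left (by nlinarith [Real.pi_gt_three, abs_nonneg (s 1 : ℝ)])
        (by positivity)).trans h.two_mul_exp_neg_mul_le_one
    calc _ ≤ 2 * Real.exp (-t) *
          ‖gApprox κ (n + k + 1) (shiftSeq s) (F t) - gApprox κ (k + 1) (shiftSeq s) (F t)‖ :=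
          h.norm_gApprox_succ_sub_le hκ _ _
      _ ≤ 2 * Real.exp (-t) * (1 / 2) ^ k :=
          mul_le_mul_of_nonneg_left (ih h.shift) (by positivity)
      _ ≤ (1 / 2) ^ (k + 1) := by
          rw [pow_succ]
          nlinarith [pow_pos (one_half_pos (α := ℝ)) k]

lemma exists_rayTendsto (h : LargePotential K s t) (hκ : ‖κ‖ ≤ K) :
    ∃ z, RayTendsto κ s t z ∧ ∀ k, ‖gApprox κ (k + 1) s t - z‖ ≤ 2 * (1 / 2) ^ k := by
  have hgeom :
      ∀ k, dist (gApprox κ (k + 1) s t) (gApprox κ (k + 1 + 1) s t) ≤ 1 * (1 / 2) ^ k :=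
    fun k => by
      rw [dist_comm, dist_eq_norm, one_mul]
      simpa [add_comm 1 k] using h.norm_gApprox_add_sub_le hκ k 1
  obtain ⟨z, hz⟩ :=
    cauchySeq_tendsto_of_complete (cauchySeq_of_le_geometric _ _ one_half_lt_one hgeom)
  refine ⟨z, ⟨Eventually.of_forall (h.approxDefined_gApprox hκ),
    (tendsto_add_atTop_iff_nat 1).1 hz⟩, fun k => ?_⟩
  rw [← dist_eq_norm]
  exact (dist_le_of_le_geometric_of_tendsto _ _ one_half_lt_one hgeom hz k).trans_eq (by ring)

lemma rayTendsto_ray (h : LargePotential K s t) (hκ : ‖κ‖ ≤ K) :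
    RayTendsto κ s t (ray κ s t) := by
  obtain ⟨z, hz, -⟩ := h.exists_rayTendsto hκ
  rwa [ray_eq_of_rayTendsto hz]

lemma norm_gApprox_sub_ray_le (h : LargePotential K s t) (hκ : ‖κ‖ ≤ K) (k : ℕ) :
    ‖gApprox κ (k + 1) s t - ray κ s t‖ ≤ 2 * (1 / 2) ^ k := by
  obtain ⟨z, hz, hbound⟩ := h.exists_rayTendsto hκ
  rw [ray_eq_of_rayTendsto hz]
  exact hbound k

lemma norm_ray_sub_le (h : LargePotential K s t) (hκ : ‖κ‖ ≤ K) :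
    ‖ray κ s t - ((t : ℂ) + 2 * (π : ℂ) * Complex.I * (s 0 : ℂ) - κ)‖ ≤
      2 * Real.exp (-t) * (K + 2 * π * |(s 1 : ℝ)| + π + 2) := by
  have hray : ‖ray κ s t - gApprox κ 1 s t‖ ≤
      2 * Real.exp (-t) * (K + 2 * π * |(s 1 : ℝ)| + π + 1) :=
    le_of_tendsto (((h.rayTendsto_ray hκ).2.comp (tendsto_add_atTop_nat 1)).sub_const _).norm
      (Eventually.of_forall (h.norm_gApprox_succ_sub_gApprox_one_le hκ))
  have hF : 1 ≤ F t := h.one_le_F ((norm_nonneg κ).trans hκ)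
  have hfirst : gApprox κ 1 s t - ((t : ℂ) + 2 * (π : ℂ) * Complex.I * (s 0 : ℂ) - κ) =
      ((Real.log (F t) - t : ℝ) : ℂ) := by
    simp only [gApprox, Lk, Complex.ofReal_sub, Complex.ofReal_log (zero_le_one.trans hF)]
    ring
  calc _ = ‖(ray κ s t - gApprox κ 1 s t) + ((Real.log (F t) - t : ℝ) : ℂ)‖ := by
        rw [← hfirst]; ring_nf
    _ ≤ ‖ray κ s t - gApprox κ 1 s t‖ + ‖((Real.log (F t) - t : ℝ) : ℂ)‖ :=
        norm_add_le _ _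
    _ ≤ _ := by
        rw [Complex.norm_real, Real.norm_eq_abs]
        linarith [abs_log_F_sub_le hF]

lemma differentiableOn_gApprox (h : LargePotential K s t) (n : ℕ) :
    DifferentiableOn ℂ (fun κ => gApprox κ n s t) (ball 0 K) := by
  induction n generalizing s t with
  | zero => exact differentiableOn_const _
  | succ n ih =>
    have hslit :
        ∀ κ ∈ ball (0 : ℂ) K, gApprox κ n (shiftSeq s) (F t) ∈ Complex.slitPlane :=
      fun κ hκ => Or.inl <| by
        linarith [h.exp_div_two_le_re_gApprox_shift (mem_ball_zero_iff.1 hκ).le n, Real.exp_pos t]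
    exact (((ih h.shift).clog hslit).sub differentiableOn_id).add (differentiableOn_const _)

lemma tendstoUniformlyOn_gApprox (h : LargePotential K s t) :
    TendstoUniformlyOn (fun n κ => gApprox κ (n + 1) s t) (fun κ => ray κ s t) atTop
      (ball 0 K) := by
  rw [Metric.tendstoUniformlyOn_iff]
  intro ε hε
  have hsmall : ∀ᶠ k in atTop, 2 * (1 / 2 : ℝ) ^ k < ε := by
    have := (tendsto_pow_atTop_nhds_zero_of_lt_one (by norm_num : (0 : ℝ) ≤ 1 / 2)
      one_half_lt_one).const_mul 2
    rw [mul_zero] at this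
    exact this.eventually (gt_mem_nhds hε)
  filter_upwards [hsmall] with k hk κ hκ
  rw [dist_comm, dist_eq_norm]
  exact (h.norm_gApprox_sub_ray_le (mem_ball_zero_iff.1 hκ).le k).trans_lt hk

lemma differentiableOn_ray (h : LargePotential K s t) :
    DifferentiableOn ℂ (fun κ => ray κ s t) (ball 0 K) :=
  h.tendstoUniformlyOn_gApprox.tendstoLocallyUniformlyOn.differentiableOn
    (Eventually.of_forall fun n => h.differentiableOn_gApprox (n + 1)) isOpen_ball

end LargePotential

lemma norm_deriv_le_of_norm_le {E : Type*} [NormedAddCommGroup E] [NormedSpace ℂ E]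
    {r : ℂ → E} {w : ℂ} {R M : ℝ} (hR : 0 < R) (hr : DifferentiableOn ℂ r (ball w R))
    (hM : ∀ z ∈ ball w R, ‖r z‖ ≤ M) : ‖deriv r w‖ ≤ 2 * M / R := by
  refine Complex.norm_deriv_le_div_of_mapsTo_ball hr (fun z hz => ?_) hR
  rw [mem_closedBall, dist_eq_norm]
  linarith [norm_sub_le (r z) (r w), hM z hz, hM w (mem_ball_self hR)]

section SmallPerturbation

variable {r : ℂ → ℂ} {a : ℂ}

lemma differentiableAt_and_nnnorm_deriv_le (hr : DifferentiableOn ℂ r (ball a 4))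
    (hM : ∀ z ∈ ball a 4, ‖r z‖ ≤ 1 / 2) {w : ℂ} (hw : w ∈ closedBall a 1) :
    DifferentiableAt ℂ r w ∧ ‖deriv r w‖₊ ≤ 1 / 2 := by
  have hsub : ball w 3 ⊆ ball a 4 :=
    ball_subset_ball' (by linarith [mem_closedBall.1 hw])
  refine ⟨(hr.mono hsub).differentiableAt (ball_mem_nhds w three_pos), ?_⟩
  rw [← NNReal.coe_le_coe, coe_nnnorm]
  have := norm_deriv_le_of_norm_le three_pos (hr.mono hsub) fun z hz => hM z (hsub hz)
  push_cast
  linarith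

lemma lipschitzOnWith_closedBall_of_norm_le (hr : DifferentiableOn ℂ r (ball a 4))
    (hM : ∀ z ∈ ball a 4, ‖r z‖ ≤ 1 / 2) : LipschitzOnWith (1 / 2) r (closedBall a 1) :=
  (convex_closedBall a 1).lipschitzOnWith_of_nnnorm_deriv_le
    (fun _ hw => (differentiableAt_and_nnnorm_deriv_le hr hM hw).1)
    (fun _ hw => (differentiableAt_and_nnnorm_deriv_le hr hM hw).2)

lemma exists_add_eq_self_of_lipschitzOnWith (hlip : LipschitzOnWith (1 / 2) r (closedBall a 1))
    (hr : ∀ z ∈ closedBall a 1, ‖r z‖ ≤ 1) : ∃ z ∈ closedBall a 1, a + r z = z := by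
  have hmaps : MapsTo (fun z => a + r z) (closedBall a 1) (closedBall a 1) := fun z hz => by
    rw [mem_closedBall, dist_eq_norm, add_sub_cancel_left]
    exact hr z hz
  have hcontr : ContractingWith (1 / 2) (hmaps.restrict _ _ _) := by
    refine ⟨by norm_num, LipschitzOnWith.mapsToRestrict hmaps ?_⟩
    exact LipschitzOnWith.of_dist_le_mul fun u hu v hv => by
      rw [dist_add_left]; exact hlip.dist_le_mul u hu v hv
  obtain ⟨z, hz, hfix, -⟩ := hcontr.exists_fixedPoint' isClosed_closedBall.isComplete hmaps
    (mem_closedBall_self zero_le_one) (edist_ne_top _ _)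
  exact ⟨z, hz, hfix⟩

end SmallPerturbation

theorem exists_unique_zero_of_norm_sub_le {f : ℂ → ℂ} {U : Set ℂ} {a : ℂ}
    (hf : DifferentiableOn ℂ f U) (hU : ball a 4 ⊆ U)
    (hfa : ∀ z ∈ U, ‖f z - (a - z)‖ ≤ 1 / 2) :
    ∃ z₀ ∈ U, f z₀ = 0 ∧ (∀ z ∈ U, f z = 0 → z = z₀) ∧ deriv f z₀ ≠ 0 := by
  set r := fun z => f z - (a - z) with hr_def
  have hr : DifferentiableOn ℂ r (ball a 4) :=
    (hf.mono hU).sub ((differentiableOn_const a).sub differentiableOn_id)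
  have hM : ∀ z ∈ ball a 4, ‖r z‖ ≤ 1 / 2 := fun z hz => hfa z (hU hz)
  have hlip := lipschitzOnWith_closedBall_of_norm_le hr hM
  have hball : closedBall a 1 ⊆ U := (closedBall_subset_ball (by norm_num)).trans hU
  have hzero : ∀ z, f z = 0 ↔ a + r z = z := fun z => by
    simp only [hr_def]; constructor <;> intro h <;> linear_combination h
  have hmem : ∀ z ∈ U, f z = 0 → z ∈ closedBall a 1 := fun z hz h0 => by
    rw [mem_closedBall, dist_eq_norm, ← (hzero z).1 h0, add_sub_cancel_left]
    linarith [hfa z hz]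
  obtain ⟨z₀, hz₀, hfix⟩ := exists_add_eq_self_of_lipschitzOnWith hlip fun z hz => by
    linarith [hfa z (hball hz)]
  have hfz₀ : f z₀ = 0 := (hzero z₀).2 hfix
  refine ⟨z₀, hball hz₀, hfz₀, fun z hz h0 => ?_, ?_⟩
  · have hdist := hlip.dist_le_mul z (hmem z hz h0) z₀ hz₀
    rw [← dist_add_left a, (hzero z).1 h0, hfix] at hdist
    have := dist_nonneg (x := z) (y := z₀)
    exact dist_le_zero.1 (by push_cast at hdist; linarith)
  · obtain ⟨hdiff, hderiv⟩ := differentiableAt_and_nnnorm_deriv_le hr hM hz₀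
    have hf_eq : f = fun z => r z + (a - z) := by funext z; simp [hr_def]
    have hd : deriv f z₀ = deriv r z₀ - 1 := by
      rw [hf_eq]
      exact ((hdiff.hasDerivAt).add ((hasDerivAt_id z₀).const_sub a)).deriv.trans (by ring)
    have hderiv' : ‖deriv r z₀‖ ≤ 1 / 2 := by exact_mod_cast hderiv
    rw [hd, sub_ne_zero]
    intro h1
    rw [h1, norm_one] at hderiv'
    norm_num at hderiv'

lemma largePotential_two_pi_mul {s : ℕ → ℤ} {x t : ℝ}
    (hs : ∀ k, |(s k : ℝ)| ≤ F^[k] x) (ht : x + 33 ≤ t) : LargePotential (2 * π * t) s t := by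
  have hx : 0 ≤ x := (abs_nonneg _).trans (hs 0)
  have h60 := sixty_mul_le_exp (by linarith : (20 : ℝ) ≤ t)
  have h1200 := sixty_mul_le_exp (le_refl (20 : ℝ))
  have hbase : F (x + 13) + (13 * t + 13) ≤ F t := by
    have hgap : Real.exp (x + 13) * Real.exp 20 ≤ Real.exp t := by
      rw [← Real.exp_add]; exact Real.exp_le_exp.2 (by linarith)
    unfold F
    nlinarith [mul_le_mul_of_nonneg_left h1200 (Real.exp_pos (x + 13)).le]
  intro k
  have hgrow := F_iter_succ_add_le (by linarith) (by linarith) hbase k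
  have hmul := natCast_mul_F_iter_succ_le 13 hx k
  push_cast at hmul
  have hπ := Real.pi_lt_d2
  have := mul_le_mul_of_nonneg_right hπ.le (abs_nonneg (s (k + 1) : ℝ))
  have := mul_le_mul_of_nonneg_right hπ.le (by linarith : (0 : ℝ) ≤ t)
  linarith [hs (k + 1), abs_nonneg (s (k + 1) : ℝ)]

lemma two_mul_exp_neg_mul_le_half {t y : ℝ} (ht : 20 ≤ t) (hy : 0 ≤ y)
    (hyt : y ≤ Real.exp (t - 20)) :
    2 * Real.exp (-t) * (2 * π * t + 2 * π * y + 12) ≤ 1 / 2 := by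
  have h60 := sixty_mul_le_exp ht
  have h1200 := sixty_mul_le_exp (le_refl (20 : ℝ))
  have hgap : Real.exp (t - 20) * Real.exp 20 = Real.exp t := by rw [← Real.exp_add]; ring_nf
  have hπ := Real.pi_lt_d2
  have hbound : 4 * (2 * π * t + 2 * π * y + 12) ≤ Real.exp t := by
    nlinarith [mul_le_mul_of_nonneg_left h1200 (Real.exp_pos (t - 20)).le,
      mul_le_mul_of_nonneg_right hπ.le hy,
      mul_le_mul_of_nonneg_right hπ.le (by linarith : 0 ≤ t)]
  have hexp : Real.exp (-t) * Real.exp t = 1 := by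
    rw [← Real.exp_add, neg_add_cancel, Real.exp_zero]
  nlinarith [mul_le_mul_of_nonneg_left hbound (Real.exp_pos (-t)).le]

lemma ball_four_subset_ball_two_pi_mul {j : ℤ} {x t : ℝ} (hj : |(j : ℝ)| ≤ x)
    (ht : 2 * x + 33 ≤ t) :
    ball ((t : ℂ) + 2 * (π : ℂ) * Complex.I * (j : ℂ)) 4 ⊆ ball 0 (2 * π * t) := by
  have hx : 0 ≤ x := (abs_nonneg _).trans hj
  refine ball_subset_ball' ?_
  rw [dist_zero_right]
  refine (add_le_add_right (norm_add_le _ _) 4).trans ?_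
  rw [Complex.norm_real, Real.norm_of_nonneg (by linarith), norm_two_pi_I_mul_intCast]
  nlinarith [mul_le_mul_of_nonneg_left hj (by positivity : 0 ≤ 2 * π),
    mul_le_mul_of_nonneg_right Real.pi_gt_three.le (by linarith : 0 ≤ t - x)]

/-- **Existence of Parameter Ray Tails.**
For every `s ∈ S_0` there is `T_s > t_s` such that for every `t ≥ T_s` the map
`κ ↦ g_s^κ(t)` is defined and holomorphic on the disk `B_{2πt}(0)` and has there exactly
one zero `κ₀`, which is simple; moreover `κ₀ = t + 2πi s_1 + R_s(t)` with
`|R_s(t)| ≤ 2e^{-t}(2πt + 2π|s_2| + 12) < 5`. -/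
theorem parameter_ray_tails (s : ℕ → ℤ) (hs : expBounded s) :
    ∃ T : ℝ, tmin s < ENNReal.ofReal T ∧
      ∀ t : ℝ, T ≤ t →
        (∀ κ ∈ Metric.ball (0 : ℂ) (2 * Real.pi * t), RayDefinedAt κ s t) ∧
        DifferentiableOn ℂ (fun κ => ray κ s t) (Metric.ball (0 : ℂ) (2 * Real.pi * t)) ∧
        ∃ κ₀ ∈ Metric.ball (0 : ℂ) (2 * Real.pi * t),
          ray κ₀ s t = 0 ∧
          (∀ κ ∈ Metric.ball (0 : ℂ) (2 * Real.pi * t), ray κ s t = 0 → κ = κ₀) ∧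
          deriv (fun κ => ray κ s t) κ₀ ≠ 0 ∧
          ‖κ₀ - ((t : ℂ) + 2 * (Real.pi : ℂ) * Complex.I * (s 0 : ℂ))‖ ≤
            2 * Real.exp (-t) * (2 * Real.pi * t + 2 * Real.pi * |(s 1 : ℝ)| + 12) ∧
          2 * Real.exp (-t) * (2 * Real.pi * t + 2 * Real.pi * |(s 1 : ℝ)| + 12) < 5 := by
  obtain ⟨x, hx, hsx⟩ := hs
  refine ⟨2 * x + 33, (tmin_le_ofReal_add_one hsx).trans_lt
    ((ENNReal.ofReal_lt_ofReal_iff (by linarith)).2 (by linarith)), fun t ht => ?_⟩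
  have hpot : LargePotential (2 * π * t) s t := largePotential_two_pi_mul hsx (by linarith)
  have hnorm : ∀ κ ∈ ball (0 : ℂ) (2 * π * t), ‖κ‖ ≤ 2 * π * t := fun κ hκ =>
    (mem_ball_zero_iff.1 hκ).le
  set a : ℂ := (t : ℂ) + 2 * (π : ℂ) * Complex.I * (s 0 : ℂ)
  set ρ := 2 * Real.exp (-t) * (2 * π * t + 2 * π * |(s 1 : ℝ)| + 12)
  have hρ : ρ ≤ 1 / 2 := by
    refine two_mul_exp_neg_mul_le_half (by linarith) (abs_nonneg _) ((hsx 1).trans ?_)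
    simp only [Function.iterate_one, F]
    linarith [Real.exp_le_exp.2 (by linarith : x ≤ t - 20)]
  have hray : ∀ κ ∈ ball (0 : ℂ) (2 * π * t), ‖ray κ s t - (a - κ)‖ ≤ ρ := fun κ hκ =>
    (hpot.norm_ray_sub_le (hnorm κ hκ)).trans
      (mul_le_mul_of_nonneg_left (by linarith [Real.pi_lt_d2]) (by positivity))
  obtain ⟨κ₀, hκ₀, hzero, huniq, hderiv⟩ := exists_unique_zero_of_norm_sub_le
    hpot.differentiableOn_ray (ball_four_subset_ball_two_pi_mul (by simpa using hsx 0) ht)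
    fun κ hκ => (hray κ hκ).trans hρ
  refine ⟨fun κ hκ => ⟨_, hpot.rayTendsto_ray (hnorm κ hκ)⟩, hpot.differentiableOn_ray,
    κ₀, hκ₀, hzero, huniq, hderiv, ?_, hρ.trans_lt (by norm_num)⟩
  simpa [hzero, norm_sub_rev] using hray κ₀ hκ₀
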